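/- Let i ∈ ℕ and for j ∈ ℕ set M_j = (Σ_{k=0}^∞ k^j·w(k))/z(1) (all finite). Let (m_n) be a sequence of positive integers and (μ_n) a sequence in (0,∞) such that m_n → ∞, μ_n → 0 and m_n^γ·μ_n → C for some C ∈ (0, b/(1−γ)). Then the i-th moment of the cut-off measure ν_{e^{μ_n},m_n} admits the first-order expansion ( (Σ_{k=0}^{m_n} k^i·w(k)·e^{μ_n k}) / z_{m_n}(e^{μ_n}) − M_i − μ_n·(M_{i+1} − M_i·M_1) ) / μ_n → 0 as n → ∞. -/

import Mathlib

open Filter Topology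

/-- Zero-range jump rates: `g 0 = 0`, `g n = 1 + b / n ^ γ` for `n ≥ 1`. -/
noncomputable def zrpG (b γ : ℝ) (n : ℕ) : ℝ := if n = 0 then 0 else 1 + b / (n : ℝ) ^ γ

/-- Stationary weights: `w 0 = 1`, `w n = ∏_{k=1}^n 1 / g k`. -/
noncomputable def zrpW (b γ : ℝ) (n : ℕ) : ℝ := ∏ k ∈ Finset.Icc 1 n, (zrpG b γ k)⁻¹

/-- Single-site partition function `z φ = Σ_{k≥0} w k · φ^k`. -/
noncomputable def zrpZfun (b γ φ : ℝ) : ℝ := ∑' k : ℕ, zrpW b γ k * φ ^ k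

/-- Critical density `ρ_c = (Σ k·w k) / z 1`. -/
noncomputable def zrpRhoC (b γ : ℝ) : ℝ :=
  (∑' k : ℕ, (k : ℝ) * zrpW b γ k) / (∑' k : ℕ, zrpW b γ k)

/-- Critical variance `σ_c² = (Σ k²·w k) / z 1 − ρ_c²`. -/
noncomputable def zrpSigmaSq (b γ : ℝ) : ℝ :=
  (∑' k : ℕ, (k : ℝ) ^ 2 * zrpW b γ k) / (∑' k : ℕ, zrpW b γ k) - (zrpRhoC b γ) ^ 2

/-- Truncated partition function `z_m(φ) = Σ_{k=0}^m w k · φ^k`. -/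
noncomputable def zrpZtrunc (b γ : ℝ) (m : ℕ) (φ : ℝ) : ℝ :=
  ∑ k ∈ Finset.range (m + 1), zrpW b γ k * φ ^ k

/-- Truncated density function `R_m(φ) = (Σ_{k=0}^m k·w k·φ^k) / z_m(φ)`. -/
noncomputable def zrpRtrunc (b γ : ℝ) (m : ℕ) (φ : ℝ) : ℝ :=
  (∑ k ∈ Finset.range (m + 1), (k : ℝ) * zrpW b γ k * φ ^ k) / zrpZtrunc b γ m φ

/-- Canonical partition function `Z(L,N) = Σ_{η : Fin L → ℕ, Σ η = N} ∏ w (η x)`. -/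
noncomputable def zrpZc (b γ : ℝ) (L N : ℕ) : ℝ :=
  ∑ η ∈ (Fintype.piFinset fun _ : Fin L => Finset.range (N + 1)).filter
      (fun η => ∑ x, η x = N),
    ∏ x, zrpW b γ (η x)

/-- Cut-off canonical partition function, restricting to `η x ≤ m` for all `x`. -/
noncomputable def zrpQc (b γ : ℝ) (L N m : ℕ) : ℝ :=
  ∑ η ∈ (Fintype.piFinset fun _ : Fin L => Finset.range (N + 1)).filter
      (fun η => ∑ x, η x = N ∧ ∀ x, η x ≤ m),
    ∏ x, zrpW b γ (η x)

/-- Finite-size rate function `I_{L,N}(m)`. -/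
noncomputable def zrpI (b γ : ℝ) (L N m : ℕ) : ℝ :=
  -(1 / (L : ℝ)) * Real.log ((zrpQc b γ L N m - zrpQc b γ L N (m - 1)) / zrpZc b γ L N)

/-!
Comparing `w (n + 1) / w n = 1 / g (n + 1) ≈ exp (-b n ^ (-γ))` with the concavity of
`x ↦ x ^ (1 - γ)` shows `w n = O(exp (-c n ^ (1 - γ)))` for every `c < b / (1 - γ)`.
Writing `e ^ (μ k) = 1 + μ k + r_k`, the truncated moment is the full moment plus `μ` times the
next one, minus the corresponding tails beyond `m`, plus `Σ k ^ j w k r_k`. For `k ≤ m`,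
`μ k ≤ (m ^ γ μ) k ^ (1 - γ) ≤ δ k ^ (1 - γ)` with `C < δ < b / (1 - γ)`, so
`r_k ≤ μ² k² exp (δ k ^ (1 - γ))` and the remainder is `O(μ²)`. The tails are `o(μ)` because
`1 / μ ≍ m ^ γ ≤ k` on them. The expansion of the ratio is then the quotient rule for first-order
expansions.
-/

open Finset Real

lemma exists_forall_le_of_eventually_succ_le {α : Type*} [SemilatticeSup α] [Nonempty α]
    {f : ℕ → α} (h : ∀ᶠ n in atTop, f (n + 1) ≤ f n) : ∃ B, ∀ n, f n ≤ B := by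
  obtain ⟨K, hK⟩ := eventually_atTop.1 h
  obtain ⟨B, hB⟩ := ((Set.finite_Iic K).image f).bddAbove
  refine ⟨B, fun n => ?_⟩
  rcases le_total n K with hn | hn
  · exact hB ⟨n, hn, rfl⟩
  · exact (antitoneOn_nat_Ici_of_succ_le hK (le_refl K) hn hn).trans (hB ⟨K, le_refl K, rfl⟩)

lemma rpow_add_one_le {α x : ℝ} (hα0 : 0 ≤ α) (hα1 : α ≤ 1) (hx : 0 < x) :
    (x + 1) ^ α ≤ x ^ α + α * x ^ (α - 1) := by
  have hbern : (1 + x⁻¹) ^ α ≤ 1 + α * x⁻¹ :=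
    rpow_one_add_le_one_add_mul_self (by linarith [inv_pos.2 hx]) hα0 hα1
  calc (x + 1) ^ α = x ^ α * (1 + x⁻¹) ^ α := by
        rw [← mul_rpow hx.le (by positivity), mul_add, mul_inv_cancel₀ hx.ne', mul_one]
    _ ≤ x ^ α * (1 + α * x⁻¹) := by gcongr
    _ = x ^ α + α * x ^ (α - 1) := by rw [rpow_sub_one hx.ne']; ring

lemma exp_sub_sq_le_one_add {x : ℝ} (hx : 0 ≤ x) : exp (x - x ^ 2) ≤ 1 + x := by
  have hinv : exp (x - x ^ 2) * exp (-(x - x ^ 2)) = 1 := by rw [← exp_add]; simp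
  have hlow : 1 - x + x ^ 2 ≤ exp (-(x - x ^ 2)) := by linarith [add_one_le_exp (-(x - x ^ 2))]
  have hq : 0 < 1 - x + x ^ 2 := by nlinarith [sq_nonneg (x - 1 / 2)]
  refine le_of_mul_le_mul_right ?_ hq
  calc exp (x - x ^ 2) * (1 - x + x ^ 2) ≤ exp (x - x ^ 2) * exp (-(x - x ^ 2)) := by gcongr
    _ = 1 := hinv
    _ ≤ (1 + x) * (1 - x + x ^ 2) := by nlinarith [pow_nonneg hx 3]

lemma exp_mul_le_one_add_mul {β b y : ℝ} (hb : 0 < b) (hy : 0 ≤ y) (hyβ : y ≤ (b - β) / b ^ 2) :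
    exp (β * y) ≤ 1 + b * y := by
  have hlin : β * y ≤ b * y - (b * y) ^ 2 := by
    rw [le_div_iff₀ (by positivity)] at hyβ
    nlinarith
  exact (exp_le_exp.2 hlin).trans (exp_sub_sq_le_one_add (by positivity))

lemma summable_pow_mul_exp_neg_mul_rpow {α c : ℝ} (hα : 0 < α) (hc : 0 < c) (p : ℕ) :
    Summable fun k : ℕ => (k : ℝ) ^ p * exp (-(c * (k : ℝ) ^ α)) := by
  have hpow : Tendsto (fun k : ℕ => (k : ℝ) ^ α) atTop atTop :=
    (tendsto_rpow_atTop hα).comp tendsto_natCast_atTop_atTop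
  have hexp := (isLittleO_exp_neg_mul_rpow_atTop hc (-(p + 2) / α)).comp_tendsto hpow
  refine summable_of_isBigO_nat (summable_nat_rpow.2 (by norm_num : (-2 : ℝ) < -1)) ?_
  refine ((Asymptotics.isBigO_refl (fun k : ℕ => (k : ℝ) ^ p) atTop).mul hexp.isBigO).congr'
    (by simp [neg_mul]) ?_
  filter_upwards [eventually_gt_atTop 0] with k hk
  have hk' : (0 : ℝ) < k := by exact_mod_cast hk
  simp only [Function.comp_apply]
  rw [← rpow_mul hk'.le, mul_div_cancel₀ _ hα.ne', ← rpow_natCast, ← rpow_add hk']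
  ring_nf

lemma exp_sub_one_sub_le_sq_mul_exp {x : ℝ} (hx : 0 ≤ x) : exp x - 1 - x ≤ x ^ 2 * exp x := by
  have hinv : exp x * exp (-x) = 1 := by rw [← exp_add]; simp
  nlinarith [exp_pos x, mul_le_mul_of_nonneg_left (add_one_le_exp (-x)) (exp_pos x).le]

lemma mul_natCast_le_mul_rpow {γ δ μ : ℝ} {k N : ℕ} (hγ : 0 ≤ γ) (hμ : 0 ≤ μ) (hkN : k ≤ N)
    (hN : (N : ℝ) ^ γ * μ ≤ δ) : μ * k ≤ δ * (k : ℝ) ^ (1 - γ) := by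
  have hk : (k : ℝ) = (k : ℝ) ^ γ * (k : ℝ) ^ (1 - γ) := by
    rw [← rpow_add' (Nat.cast_nonneg k) (by norm_num), add_sub_cancel, rpow_one]
  calc μ * k = (k : ℝ) ^ γ * μ * (k : ℝ) ^ (1 - γ) := by nth_rw 1 [hk]; ring
    _ ≤ (N : ℝ) ^ γ * μ * (k : ℝ) ^ (1 - γ) := by gcongr
    _ ≤ δ * (k : ℝ) ^ (1 - γ) := by gcongr

lemma tendsto_div_sub_div_of_expansions {ι : Type*} {l : Filter ι} {A Z μ : ι → ℝ}
    {a a' z z' : ℝ} (hA : Tendsto (fun n => (A n - a - μ n * a') / μ n) l (𝓝 0))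
    (hZ : Tendsto (fun n => (Z n - z - μ n * z') / μ n) l (𝓝 0))
    (hμ : Tendsto μ l (𝓝 0)) (hμ0 : ∀ n, μ n ≠ 0) (hz : z ≠ 0) :
    Tendsto (fun n => (A n / Z n - a / z - μ n * (a' / z - a * z' / z ^ 2)) / μ n) l (𝓝 0) := by
  set u := fun n => (A n - a - μ n * a') / μ n
  set v := fun n => (Z n - z - μ n * z') / μ n
  have hZeq : ∀ n, Z n = z + μ n * (z' + v n) := fun n => by
    simp only [v]; field_simp [hμ0 n]; ring
  have hAeq : ∀ n, A n = a + μ n * (a' + u n) := fun n => by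
    simp only [u]; field_simp [hμ0 n]; ring
  have hZlim : Tendsto Z l (𝓝 z) := by
    have h := (tendsto_const_nhds (x := z)).add (hμ.mul ((tendsto_const_nhds (x := z')).add hZ))
    rw [zero_mul, add_zero] at h
    exact h.congr fun n => (hZeq n).symm
  have hlim : Tendsto (fun n => ((a' + u n) * z - a * (z' + v n)) / (Z n * z) -
      (a' / z - a * z' / z ^ 2)) l (𝓝 0) := by
    have := (((((tendsto_const_nhds (x := a')).add hA).mul_const z).sub
      (((tendsto_const_nhds (x := z')).add hZ).const_mul a)).div (hZlim.mul_const z)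
      (mul_ne_zero hz hz)).sub
      (tendsto_const_nhds (x := a' / z - a * z' / z ^ 2))
    rwa [show ((a' + 0) * z - a * (z' + 0)) / (z * z) - (a' / z - a * z' / z ^ 2) = 0 by
      field_simp; ring] at this
  refine hlim.congr' ?_
  filter_upwards [hZlim.eventually_ne hz] with n hn
  rw [hAeq n]
  field_simp [hμ0 n]
  rw [hZeq n]
  ring

section ZeroRange

variable {b γ : ℝ}

lemma zrpG_eq {k : ℕ} (hk : k ≠ 0) : zrpG b γ k = 1 + b * (k : ℝ) ^ (-γ) := by
  rw [zrpG, if_neg hk, rpow_neg (Nat.cast_nonneg k), div_eq_mul_inv]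

lemma one_le_zrpG (hb : 0 ≤ b) {k : ℕ} (hk : k ≠ 0) : 1 ≤ zrpG b γ k := by
  rw [zrpG_eq hk]
  have : 0 ≤ b * (k : ℝ) ^ (-γ) := by positivity
  linarith

lemma zrpW_pos (hb : 0 ≤ b) (n : ℕ) : 0 < zrpW b γ n :=
  prod_pos fun _ hk => inv_pos.2 <| one_pos.trans_le <|
    one_le_zrpG hb (Nat.one_le_iff_ne_zero.1 (mem_Icc.1 hk).1)

lemma zrpW_zero : zrpW b γ 0 = 1 := by simp [zrpW]

lemma zrpW_succ (n : ℕ) : zrpW b γ (n + 1) = zrpW b γ n * (zrpG b γ (n + 1))⁻¹ :=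
  prod_Icc_succ_top (by omega) _

lemma zrpW_succ_mul_exp_le (hb : 0 ≤ b) (hγ0 : 0 ≤ γ) (hγ1 : γ ≤ 1) {c : ℝ} (hc : 0 ≤ c)
    {n : ℕ} (hg : exp (c * (1 - γ) * ((n + 1 : ℕ) : ℝ) ^ (-γ)) ≤ zrpG b γ (n + 1)) :
    zrpW b γ (n + 1) * exp (c * ((n + 1 + 1 : ℕ) : ℝ) ^ (1 - γ)) ≤
      zrpW b γ n * exp (c * ((n + 1 : ℕ) : ℝ) ^ (1 - γ)) := by
  set x : ℝ := ((n + 1 : ℕ) : ℝ)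
  have hx : 0 < x := by positivity
  have hg0 : 0 < zrpG b γ (n + 1) := one_pos.trans_le (one_le_zrpG hb n.succ_ne_zero)
  have hconc : c * ((n + 1 + 1 : ℕ) : ℝ) ^ (1 - γ) ≤
      c * x ^ (1 - γ) + c * (1 - γ) * x ^ (-γ) := by
    have h := rpow_add_one_le (by linarith) (by linarith) hx (α := 1 - γ)
    rw [show 1 - γ - 1 = -γ by ring] at h
    push_cast [x] at h ⊢
    nlinarith
  calc zrpW b γ (n + 1) * exp (c * ((n + 1 + 1 : ℕ) : ℝ) ^ (1 - γ))
      ≤ zrpW b γ n * (zrpG b γ (n + 1))⁻¹ * exp (c * x ^ (1 - γ) + c * (1 - γ) * x ^ (-γ)) := by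
        rw [zrpW_succ]
        gcongr
        exact mul_nonneg (zrpW_pos hb n).le (inv_pos.2 hg0).le
    _ = zrpW b γ n * exp (c * x ^ (1 - γ)) *
          (exp (c * (1 - γ) * x ^ (-γ)) / zrpG b γ (n + 1)) := by
        rw [exp_add]; ring
    _ ≤ zrpW b γ n * exp (c * x ^ (1 - γ)) * 1 := by
        gcongr
        · exact mul_nonneg (zrpW_pos hb n).le (exp_pos _).le
        · exact (div_le_one hg0).2 hg
    _ = zrpW b γ n * exp (c * x ^ (1 - γ)) := mul_one _

lemma exists_zrpW_le_exp (hb : 0 < b) (hγ0 : 0 < γ) (hγ1 : γ ≤ 1) {c : ℝ} (hc : 0 ≤ c)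
    (hcb : c * (1 - γ) < b) : ∃ B, ∀ n, zrpW b γ n ≤ B * exp (-(c * (n : ℝ) ^ (1 - γ))) := by
  have hsmall : ∀ᶠ n : ℕ in atTop, ((n + 1 : ℕ) : ℝ) ^ (-γ) ≤ (b - c * (1 - γ)) / b ^ 2 :=
    ((tendsto_rpow_neg_atTop hγ0).comp (tendsto_natCast_atTop_atTop.comp
      (tendsto_add_atTop_nat 1))).eventually_le_const (by have := sub_pos.2 hcb; positivity)
  obtain ⟨B, hB⟩ := exists_forall_le_of_eventually_succ_le
    (f := fun n => zrpW b γ n * exp (c * ((n + 1 : ℕ) : ℝ) ^ (1 - γ)))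
    (hsmall.mono fun n hn => zrpW_succ_mul_exp_le hb.le hγ0.le hγ1 hc <| by
      rw [zrpG_eq n.succ_ne_zero]
      exact exp_mul_le_one_add_mul hb (by positivity) hn)
  refine ⟨B, fun n => ?_⟩
  have hmono : c * (n : ℝ) ^ (1 - γ) ≤ c * ((n + 1 : ℕ) : ℝ) ^ (1 - γ) := by
    gcongr
    linarith
  calc zrpW b γ n ≤ zrpW b γ n * exp (c * ((n + 1 : ℕ) : ℝ) ^ (1 - γ)) *
        exp (-(c * (n : ℝ) ^ (1 - γ))) := by
        rw [mul_assoc, ← exp_add]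
        exact le_mul_of_one_le_right (zrpW_pos hb.le n).le (one_le_exp (by linarith))
    _ ≤ B * exp (-(c * (n : ℝ) ^ (1 - γ))) := by gcongr; exact hB n

lemma summable_pow_mul_zrpW_mul_exp (hb : 0 < b) (hγ0 : 0 < γ) (hγ1 : γ < 1) {δ : ℝ}
    (hδ0 : 0 ≤ δ) (hδ : δ < b / (1 - γ)) (p : ℕ) :
    Summable fun k : ℕ => (k : ℝ) ^ p * zrpW b γ k * exp (δ * (k : ℝ) ^ (1 - γ)) := by
  have hγ' : 0 < 1 - γ := by linarith
  obtain ⟨c, hδc, hcb⟩ := exists_between hδ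
  obtain ⟨B, hB⟩ := exists_zrpW_le_exp hb hγ0 hγ1.le (c := c) (by linarith)
    ((lt_div_iff₀ hγ').1 hcb)
  refine Summable.of_nonneg_of_le (fun k => by have := zrpW_pos hb.le (γ := γ) k; positivity)
    (fun k => ?_) ((summable_pow_mul_exp_neg_mul_rpow hγ' (by linarith : 0 < c - δ) p).mul_left B)
  calc (k : ℝ) ^ p * zrpW b γ k * exp (δ * (k : ℝ) ^ (1 - γ))
      ≤ (k : ℝ) ^ p * (B * exp (-(c * (k : ℝ) ^ (1 - γ)))) * exp (δ * (k : ℝ) ^ (1 - γ)) := by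
        gcongr; exact hB k
    _ = B * ((k : ℝ) ^ p * exp (-((c - δ) * (k : ℝ) ^ (1 - γ)))) := by
        rw [mul_assoc, mul_assoc, ← exp_add]; ring_nf

end ZeroRange

section CutoffExpansion

variable {w : ℕ → ℝ} {γ δ C : ℝ} {m : ℕ → ℕ} {μ : ℕ → ℝ}

lemma rpow_mul_tsum_nat_add_le (hw : ∀ k, 0 ≤ w k) (hγ0 : 0 ≤ γ) (hγ1 : γ ≤ 1)
    (hsum : ∀ p, Summable fun k : ℕ => (k : ℝ) ^ p * w k) (j N : ℕ) :
    (N : ℝ) ^ γ * ∑' k, ((k + (N + 1) : ℕ) : ℝ) ^ j * w (k + (N + 1)) ≤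
      ∑' k, ((k + (N + 1) : ℕ) : ℝ) ^ (j + 1) * w (k + (N + 1)) := by
  rw [← tsum_mul_left]
  refine Summable.tsum_le_tsum (fun k => ?_)
    (((summable_nat_add_iff (N + 1)).2 (hsum j)).mul_left _)
    ((summable_nat_add_iff (N + 1)).2 (hsum (j + 1)))
  set x : ℝ := ((k + (N + 1) : ℕ) : ℝ)
  have hx : 1 ≤ x := Nat.one_le_cast.2 (by omega)
  have hNx : (N : ℝ) ^ γ ≤ x := calc
    (N : ℝ) ^ γ ≤ x ^ γ := by gcongr; exact Nat.cast_le.2 (by omega)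
    _ ≤ x := by simpa using rpow_le_rpow_of_exponent_le hx hγ1
  calc (N : ℝ) ^ γ * (x ^ j * w (k + (N + 1))) ≤ x * (x ^ j * w (k + (N + 1))) := by
        gcongr
        exact mul_nonneg (by positivity) (hw _)
    _ = x ^ (j + 1) * w (k + (N + 1)) := by ring

lemma tendsto_tsum_nat_add_div (hw : ∀ k, 0 ≤ w k) (hγ0 : 0 ≤ γ) (hγ1 : γ ≤ 1)
    (hsum : ∀ p, Summable fun k : ℕ => (k : ℝ) ^ p * w k) (hm : Tendsto m atTop atTop)
    (hC : Tendsto (fun n => (m n : ℝ) ^ γ * μ n) atTop (𝓝 C)) (hC0 : C ≠ 0) (j : ℕ) :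
    Tendsto (fun n => (∑' k, ((k + (m n + 1) : ℕ) : ℝ) ^ j * w (k + (m n + 1))) / μ n)
      atTop (𝓝 0) := by
  have htail : Tendsto (fun n => ∑' k, ((k + (m n + 1) : ℕ) : ℝ) ^ (j + 1) * w (k + (m n + 1)))
      atTop (𝓝 0) :=
    (tendsto_sum_nat_add fun k => (k : ℝ) ^ (j + 1) * w k).comp
      (tendsto_add_atTop_nat 1 |>.comp hm)
  have hscaled : Tendsto (fun n => (m n : ℝ) ^ γ *
      ∑' k, ((k + (m n + 1) : ℕ) : ℝ) ^ j * w (k + (m n + 1))) atTop (𝓝 0) :=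
    squeeze_zero (fun n => mul_nonneg (by positivity)
      (tsum_nonneg fun k => mul_nonneg (by positivity) (hw _)))
      (fun n => rpow_mul_tsum_nat_add_le hw hγ0 hγ1 hsum j (m n)) htail
  refine (zero_div C ▸ hscaled.div hC hC0).congr' ?_
  filter_upwards [hm.eventually_gt_atTop 0] with n hn
  exact mul_div_mul_left _ _ (by positivity)

lemma tendsto_sum_exp_remainder_div (hw : ∀ k, 0 ≤ w k) (hγ0 : 0 ≤ γ) (hδ : C < δ) {j : ℕ}
    (hsum : Summable fun k : ℕ => (k : ℝ) ^ (j + 2) * w k * exp (δ * (k : ℝ) ^ (1 - γ)))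
    (hμpos : ∀ n, 0 < μ n) (hμ : Tendsto μ atTop (𝓝 0))
    (hC : Tendsto (fun n => (m n : ℝ) ^ γ * μ n) atTop (𝓝 C)) :
    Tendsto (fun n => (∑ k ∈ range (m n + 1),
      (k : ℝ) ^ j * w k * (exp (μ n * k) - 1 - μ n * k)) / μ n) atTop (𝓝 0) := by
  set E := ∑' k : ℕ, (k : ℝ) ^ (j + 2) * w k * exp (δ * (k : ℝ) ^ (1 - γ))
  have hupper : ∀ᶠ n in atTop, (∑ k ∈ range (m n + 1),
      (k : ℝ) ^ j * w k * (exp (μ n * k) - 1 - μ n * k)) / μ n ≤ μ n * E := by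
    filter_upwards [hC.eventually (ge_mem_nhds hδ)] with n hn
    have hwk : ∀ k : ℕ, 0 ≤ (k : ℝ) ^ j * w k := fun k => mul_nonneg (by positivity) (hw k)
    rw [div_le_iff₀ (hμpos n)]
    calc ∑ k ∈ range (m n + 1), (k : ℝ) ^ j * w k * (exp (μ n * k) - 1 - μ n * k)
        ≤ ∑ k ∈ range (m n + 1),
            μ n ^ 2 * ((k : ℝ) ^ (j + 2) * w k * exp (δ * (k : ℝ) ^ (1 - γ))) := by
          refine sum_le_sum fun k hk => ?_
          have hμk : 0 ≤ μ n * k := mul_nonneg (hμpos n).le k.cast_nonneg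
          calc (k : ℝ) ^ j * w k * (exp (μ n * k) - 1 - μ n * k)
              ≤ (k : ℝ) ^ j * w k * ((μ n * k) ^ 2 * exp (μ n * k)) := by
                gcongr
                · exact hwk k
                · exact exp_sub_one_sub_le_sq_mul_exp hμk
            _ ≤ (k : ℝ) ^ j * w k * ((μ n * k) ^ 2 * exp (δ * (k : ℝ) ^ (1 - γ))) := by
                refine mul_le_mul_of_nonneg_left
                  (mul_le_mul_of_nonneg_left ?_ (sq_nonneg _)) (hwk k)
                exact exp_le_exp.2 <|
                  mul_natCast_le_mul_rpow hγ0 (hμpos n).le (mem_range_succ_iff.1 hk) hn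
            _ = μ n ^ 2 * ((k : ℝ) ^ (j + 2) * w k * exp (δ * (k : ℝ) ^ (1 - γ))) := by ring
      _ = μ n ^ 2 * ∑ k ∈ range (m n + 1),
            (k : ℝ) ^ (j + 2) * w k * exp (δ * (k : ℝ) ^ (1 - γ)) := (mul_sum ..).symm
      _ ≤ μ n ^ 2 * E := by
          gcongr
          exact Summable.sum_le_tsum _ (fun k _ => mul_nonneg (mul_nonneg (by positivity) (hw k))
            (exp_pos _).le) hsum
      _ = μ n * E * μ n := by ring
  refine squeeze_zero' (Eventually.of_forall fun n => div_nonneg (sum_nonneg fun k _ =>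
    mul_nonneg (mul_nonneg (by positivity) (hw k)) ?_) (hμpos n).le) hupper
    (by simpa using hμ.mul_const E)
  linarith [add_one_le_exp (μ n * k)]

theorem tendsto_sum_mul_exp_sub_div (hw : ∀ k, 0 ≤ w k) (hγ0 : 0 ≤ γ) (hγ1 : γ ≤ 1)
    (hC0 : 0 < C) (hδ : C < δ)
    (hsum : ∀ p, Summable fun k : ℕ => (k : ℝ) ^ p * w k * exp (δ * (k : ℝ) ^ (1 - γ)))
    (hμpos : ∀ n, 0 < μ n) (hm : Tendsto m atTop atTop) (hμ : Tendsto μ atTop (𝓝 0))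
    (hC : Tendsto (fun n => (m n : ℝ) ^ γ * μ n) atTop (𝓝 C)) (j : ℕ) :
    Tendsto (fun n => ((∑ k ∈ range (m n + 1), (k : ℝ) ^ j * w k * exp (μ n * k)) -
      ∑' k : ℕ, (k : ℝ) ^ j * w k - μ n * ∑' k : ℕ, (k : ℝ) ^ (j + 1) * w k) / μ n)
      atTop (𝓝 0) := by
  have hδ0 : 0 ≤ δ := by linarith
  have hmom : ∀ p, Summable fun k : ℕ => (k : ℝ) ^ p * w k := fun p =>
    Summable.of_nonneg_of_le (fun k => mul_nonneg (by positivity) (hw k))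
      (fun k => le_mul_of_one_le_right (mul_nonneg (by positivity) (hw k))
        (one_le_exp (by positivity))) (hsum p)
  have hsplit : ∀ p n, ∑' k : ℕ, (k : ℝ) ^ p * w k = ∑ k ∈ range (m n + 1), (k : ℝ) ^ p * w k +
      ∑' k, ((k + (m n + 1) : ℕ) : ℝ) ^ p * w (k + (m n + 1)) := fun p n =>
    ((hmom p).sum_add_tsum_nat_add (m n + 1)).symm
  have hexpand : ∀ n, ∑ k ∈ range (m n + 1), (k : ℝ) ^ j * w k * exp (μ n * k) =
      ∑ k ∈ range (m n + 1), (k : ℝ) ^ j * w k +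
        μ n * ∑ k ∈ range (m n + 1), (k : ℝ) ^ (j + 1) * w k +
        ∑ k ∈ range (m n + 1), (k : ℝ) ^ j * w k * (exp (μ n * k) - 1 - μ n * k) := by
    intro n
    rw [mul_sum, ← sum_add_distrib, ← sum_add_distrib]
    exact sum_congr rfl fun k _ => by ring
  have hlim := ((tendsto_sum_exp_remainder_div hw hγ0 hδ (hsum (j + 2)) hμpos hμ hC).sub
    (tendsto_tsum_nat_add_div hw hγ0 hγ1 hmom hm hC hC0.ne' j)).sub
    ((tendsto_sum_nat_add fun k => (k : ℝ) ^ (j + 1) * w k).comp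
      ((tendsto_add_atTop_nat 1).comp hm))
  rw [sub_zero, sub_zero] at hlim
  refine hlim.congr fun n => ?_
  have hμn := (hμpos n).ne'
  simp only [Function.comp_apply]
  rw [eq_div_iff hμn, sub_mul, sub_mul, div_mul_cancel₀ _ hμn, div_mul_cancel₀ _ hμn]
  linear_combination -(hexpand n) + hsplit j n + μ n * hsplit (j + 1) n

end CutoffExpansion

theorem cutoff_moment_expansion_general (b γ : ℝ) (hγ0 : 0 < γ) (hγ1 : γ < 1) (hb : 0 < b)
    (i : ℕ) (M : ℕ → ℝ)
    (hM : ∀ j, M j = (∑' k : ℕ, (k : ℝ) ^ j * zrpW b γ k) / zrpZfun b γ 1)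
    (m : ℕ → ℕ) (μ : ℕ → ℝ) (C : ℝ)
    (hμpos : ∀ n, 0 < μ n)
    (hm : Tendsto m atTop atTop) (hμ : Tendsto μ atTop (nhds 0))
    (hC : Tendsto (fun n => (m n : ℝ) ^ γ * μ n) atTop (nhds C))
    (hC0 : 0 < C) (hCb : C < b / (1 - γ)) :
    Tendsto
      (fun n =>
        ((∑ k ∈ Finset.range (m n + 1), (k : ℝ) ^ i * zrpW b γ k * Real.exp (μ n * k)) /
            zrpZtrunc b γ (m n) (Real.exp (μ n))
          - M i - μ n * (M (i + 1) - M i * M 1)) / μ n) atTop (nhds 0) := by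
  obtain ⟨δ, hCδ, hδb⟩ := exists_between hCb
  have hsum := summable_pow_mul_zrpW_mul_exp hb hγ0 hγ1 (by linarith) hδb
  have hexp := tendsto_sum_mul_exp_sub_div (fun k => (zrpW_pos hb.le k).le) hγ0.le hγ1.le hC0 hCδ
    hsum hμpos hm hμ hC
  have hZ : zrpZfun b γ 1 = ∑' k : ℕ, (k : ℝ) ^ 0 * zrpW b γ k := by simp [zrpZfun]
  have hZtrunc : ∀ n, zrpZtrunc b γ (m n) (exp (μ n)) =
      ∑ k ∈ range (m n + 1), (k : ℝ) ^ 0 * zrpW b γ k * exp (μ n * k) := fun n => by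
    simp [zrpZtrunc, ← exp_nat_mul, mul_comm]
  have hS0 : 0 < ∑' k : ℕ, (k : ℝ) ^ 0 * zrpW b γ k := by
    have hw := summable_pow_mul_zrpW_mul_exp hb hγ0 hγ1 le_rfl (by positivity) 0
    simp only [zero_mul, exp_zero, mul_one] at hw
    exact hw.tsum_pos (fun k => (mul_pos (by positivity) (zrpW_pos hb.le k)).le) 0
      (by simp [zrpW_zero])
  refine (tendsto_div_sub_div_of_expansions (hexp i) (hexp 0) hμ (fun n => (hμpos n).ne')
    hS0.ne').congr fun n => ?_
  simp only [hZtrunc, hM, hZ, zero_add]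
  ring

/-- Let `M_j = (Σ_k k^j·w(k)) / z(1)`. Under the cut-off scaling
`m_n → ∞`, `μ_n → 0⁺`, `m_n^γ·μ_n → C` with `0 < C < b/(1−γ)`, the `i`-th moment of the
cut-off measure `ν_{e^{μ_n}, m_n}` expands as `M_i + μ_n·(M_{i+1} − M_i·M_1) + o(μ_n)`. -/
theorem cutoff_moment_expansion (b γ : ℝ) (hγ0 : 0 < γ) (hγ1 : γ < 1) (hb : 0 < b)
    (i : ℕ) (M : ℕ → ℝ)
    (hM : ∀ j, M j = (∑' k : ℕ, (k : ℝ) ^ j * zrpW b γ k) / zrpZfun b γ 1)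
    (m : ℕ → ℕ) (μ : ℕ → ℝ) (C : ℝ)
    (hmpos : ∀ n, 0 < m n) (hμpos : ∀ n, 0 < μ n)
    (hm : Tendsto m atTop atTop) (hμ : Tendsto μ atTop (nhds 0))
    (hC : Tendsto (fun n => (m n : ℝ) ^ γ * μ n) atTop (nhds C))
    (hC0 : 0 < C) (hCb : C < b / (1 - γ)) :
    Tendsto
      (fun n =>
        ((∑ k ∈ Finset.range (m n + 1), (k : ℝ) ^ i * zrpW b γ k * Real.exp (μ n * k)) /
            zrpZtrunc b γ (m n) (Real.exp (μ n))
          - M i - μ n * (M (i + 1) - M i * M 1)) / μ n) atTop (nhds 0) :=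
  cutoff_moment_expansion_general b γ hγ0 hγ1 hb i M hM m μ C hμpos hm hμ hC hC0 hCb
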